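/- arXiv:2312.11916 — 3 statements merged into one kernel-verified Lean document; each statement's English description precedes it below -/
import Mathlib

section
/- Let H be a separable Hilbert space, K a compact self-adjoint operator on H with maximal eigenvalue multiplicity N < ∞, and ξ₁, …, ξ_N ∈ H. If there exists an eigenvalue λ of K with eigenspace of dimension N_λ, an orthonormal basis φ₁,…,φ_{N_λ} of that eigenspace, such that the N_λ × N matrix A_λ = (⟨φ_j, ξ_k⟩) has rank strictly less than N_λ, then L_{ξ₁} + ⋯ + L_{ξ_N} ≠ H. -/
open scoped RealInnerProductSpace

/-- The cyclic subspace `L_ξ` generated by `ξ`: the closure of the span of `{Kⁿ ξ}`. -/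
noncomputable def cyclicSubspace {H : Type*} [NormedAddCommGroup H] [InnerProductSpace ℝ H]
    (K : H →L[ℝ] H) (ξ : H) : Submodule ℝ H :=
  (Submodule.span ℝ (Set.range fun n : ℕ => (K ^ n) ξ)).topologicalClosure

/-- `K` compact self-adjoint with maximal eigenvalue multiplicity `N < ∞`.
If there is an eigenvalue `λ` with eigenspace of dimension `N_λ`, an orthonormal basis
`φ₁,…,φ_{N_λ}` of that eigenspace, such that the `N_λ × N` matrix `(⟨φ_j, ξ_k⟩)` has
rank `< N_λ`, then `L_{ξ₁} + ⋯ + L_{ξ_N} ≠ H`. -/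
theorem stmt1 {H : Type*} [NormedAddCommGroup H] [InnerProductSpace ℝ H] [CompleteSpace H]
    [TopologicalSpace.SeparableSpace H]
    (K : H →L[ℝ] H) (hcpt : IsCompactOperator K) (hsa : IsSelfAdjoint K)
    (N : ℕ)
    (hmax : ∃ μ : ℝ, Module.End.HasEigenvalue (K : H →ₗ[ℝ] H) μ ∧
      Module.finrank ℝ (Module.End.eigenspace (K : H →ₗ[ℝ] H) μ) = N)
    (hbound : ∀ μ : ℝ, Module.End.HasEigenvalue (K : H →ₗ[ℝ] H) μ →
      FiniteDimensional ℝ (Module.End.eigenspace (K : H →ₗ[ℝ] H) μ) ∧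
      Module.finrank ℝ (Module.End.eigenspace (K : H →ₗ[ℝ] H) μ) ≤ N)
    (ξ : Fin N → H)
    (lam : ℝ) (hlam : Module.End.HasEigenvalue (K : H →ₗ[ℝ] H) lam)
    (Nlam : ℕ) (φ : Fin Nlam → H)
    (hφON : Orthonormal ℝ φ)
    (hφspan : Submodule.span ℝ (Set.range φ) = Module.End.eigenspace (K : H →ₗ[ℝ] H) lam)
    (hrank : (Matrix.of fun (j : Fin Nlam) (k : Fin N) => ⟪φ j, ξ k⟫).rank < Nlam) :
    (⨆ k : Fin N, cyclicSubspace K (ξ k)) ≠ ⊤ := by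
  classical
  set A : Matrix (Fin Nlam) (Fin N) ℝ :=
    Matrix.of fun (j : Fin Nlam) (k : Fin N) => ⟪φ j, ξ k⟫ with hA
  -- find a nonzero vector in the kernel of (Matrix.transpose A)
  set L : (Fin Nlam → ℝ) →ₗ[ℝ] (Fin N → ℝ) := Matrix.mulVecLin (Matrix.transpose A) with hL
  have hrankT : Matrix.rank (Matrix.transpose A) < Nlam := by rwa [Matrix.rank_transpose]
  have hker : LinearMap.ker L ≠ ⊥ := by
    intro h
    have h1 := LinearMap.finrank_range_add_finrank_ker L
    rw [h, finrank_bot, add_zero, Module.finrank_fintype_fun_eq_card,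
      Fintype.card_fin] at h1
    exact absurd h1 (Nat.ne_of_lt hrankT)
  obtain ⟨c, hc, hc0⟩ := (Submodule.ne_bot_iff _).mp hker
  have hcA : ∀ k : Fin N, ∑ j, A j k * c j = 0 := by
    intro k
    have h2 : Matrix.vecMul c A = 0 := by
      simpa [hL, Matrix.mulVecLin_apply, Matrix.mulVec_transpose] using hc
    have h3 := congrFun h2 k
    simpa [Matrix.vecMul, dotProduct, mul_comm] using h3
  set ψ : H := ∑ j, c j • φ j with hψ
  have hψne : ψ ≠ 0 := by
    intro h
    exact hc0 (funext (Fintype.linearIndependent_iff.mp hφON.linearIndependent c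
      (by simpa [hψ] using h)))
  -- ψ is an eigenvector
  have hψeig : ψ ∈ Module.End.eigenspace (K : H →ₗ[ℝ] H) lam := by
    rw [← hφspan]
    exact Submodule.sum_mem _ fun j _ =>
      Submodule.smul_mem _ _ (Submodule.subset_span ⟨j, rfl⟩)
  have hKψ : K ψ = lam • ψ := by
    have := (Module.End.mem_eigenspace_iff).mp hψeig
    simpa using this
  have hKnψ : ∀ n : ℕ, (K ^ n) ψ = lam ^ n • ψ := by
    intro n
    induction n with
    | zero => simp
    | succ n ih =>
        rw [pow_succ', pow_succ']
        simp only [ContinuousLinearMap.mul_apply]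
        rw [ih, map_smul, hKψ, smul_smul, mul_comm lam (lam ^ n)]
  -- ψ is orthogonal to each ξ k
  have hinner : ∀ k : Fin N, ⟪ψ, ξ k⟫ = 0 := by
    intro k
    have : ⟪ψ, ξ k⟫ = ∑ j, c j * ⟪φ j, ξ k⟫ := by
      rw [hψ, sum_inner]
      simp [real_inner_smul_left]
    rw [this]
    have := hcA k
    simpa [hA, mul_comm] using this
  -- ψ is orthogonal to each Kⁿ ξ k
  have hinnerN : ∀ (k : Fin N) (n : ℕ), ⟪ψ, (K ^ n) (ξ k)⟫ = 0 := by
    intro k n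
    have hsym : ⟪(K ^ n) ψ, ξ k⟫ = ⟪ψ, (K ^ n) (ξ k)⟫ :=
      (ContinuousLinearMap.isSelfAdjoint_iff_isSymmetric.mp (hsa.pow n)) ψ (ξ k)
    rw [← hsym, hKnψ, real_inner_smul_left, hinner k, mul_zero]
  -- each cyclic subspace lies in (ℝ ∙ ψ)ᗮ
  have hle : ∀ k : Fin N, cyclicSubspace K (ξ k) ≤ (ℝ ∙ ψ)ᗮ := by
    intro k
    apply Submodule.topologicalClosure_minimal
    · rw [Submodule.span_le]
      rintro x ⟨n, rfl⟩
      exact Submodule.mem_orthogonal_singleton_iff_inner_right.mpr (hinnerN k n)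
    · exact Submodule.isClosed_orthogonal _
  intro htop
  have : (⊤ : Submodule ℝ H) ≤ (ℝ ∙ ψ)ᗮ := htop ▸ iSup_le hle
  have hmem : ψ ∈ (ℝ ∙ ψ)ᗮ := this Submodule.mem_top
  have : ⟪ψ, ψ⟫ = 0 :=
    Submodule.mem_orthogonal_singleton_iff_inner_right.mp hmem
  exact hψne (inner_self_eq_zero.mp this)
end

section
/- Let H be a separable Hilbert space, K a compact self-adjoint operator on H, λ an eigenvalue of K with eigenspace of finite dimension N_λ and orthonormal basis φ₁,…,φ_{N_λ}, and ξ₁,…,ξ_N ∈ H. If L_{ξ₁} + ⋯ + L_{ξ_N} = H, then the N_λ × N matrix A_λ = (⟨φ_j, ξ_k⟩) has rank N_λ. -/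
/-!
An eigenvector `v` of a symmetric `K` satisfies `⟪v, Kⁿ ξ⟫ = λⁿ ⟪v, ξ⟫`, so if `v` is orthogonal
to every `ξ_k` it is orthogonal to every `L_{ξ_k}`, hence to their sum `H`, and `v = 0`.
A vanishing combination `∑ c_j (row j)` of the rows of `A_λ` says exactly that the eigenvector
`∑ c_j φ_j` is orthogonal to every `ξ_k`; so it vanishes, and `c = 0` because the `φ_j` are
linearly independent.
-/

open scoped RealInnerProductSpace

section

variable {H : Type*} [NormedAddCommGroup H] [InnerProductSpace ℝ H]

theorem Submodule.mem_orthogonal_span_iff {s : Set H} {v : H} :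
    v ∈ (Submodule.span ℝ s)ᗮ ↔ ∀ u ∈ s, ⟪u, v⟫ = 0 := by
  rw [← Submodule.span_singleton_le_iff_mem, ← Submodule.isOrtho_iff_le, Submodule.isOrtho_comm,
    Submodule.isOrtho_span]
  simp

theorem LinearMap.IsSymmetric.inner_pow_apply_of_apply_eq_smul {K : H →ₗ[ℝ] H}
    (hK : K.IsSymmetric) {v : H} {lam : ℝ} (hv : K v = lam • v) (x : H) (n : ℕ) :
    ⟪v, (K ^ n) x⟫ = lam ^ n * ⟪v, x⟫ := by
  induction n with
  | zero => simp
  | succ n ih =>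
    rw [pow_succ', Module.End.mul_apply, ← hK, hv, real_inner_smul_left, ih, pow_succ']
    ring

theorem mem_orthogonal_cyclicSubspace_of_apply_eq_smul {K : H →L[ℝ] H}
    (hK : (K : H →ₗ[ℝ] H).IsSymmetric) {v : H} {lam : ℝ} (hv : K v = lam • v) {ξ : H}
    (hvξ : ⟪v, ξ⟫ = 0) : v ∈ (cyclicSubspace K ξ)ᗮ := by
  rw [cyclicSubspace, Submodule.orthogonal_closure, Submodule.mem_orthogonal_span_iff]
  rintro _ ⟨n, rfl⟩
  calc ⟪(K ^ n) ξ, v⟫ = ⟪v, ((K : H →ₗ[ℝ] H) ^ n) ξ⟫ := by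
        rw [real_inner_comm, ← ContinuousLinearMap.toLinearMap_pow]; rfl
    _ = 0 := by rw [hK.inner_pow_apply_of_apply_eq_smul hv, hvξ, mul_zero]

theorem eq_zero_of_apply_eq_smul_of_iSup_cyclicSubspace_eq_top {ι : Type*} {K : H →L[ℝ] H}
    (hK : (K : H →ₗ[ℝ] H).IsSymmetric) {ξ : ι → H} (hfull : ⨆ k, cyclicSubspace K (ξ k) = ⊤)
    {v : H} {lam : ℝ} (hv : K v = lam • v) (hvξ : ∀ k, ⟪v, ξ k⟫ = 0) : v = 0 := by
  have : v ∈ (⨆ k, cyclicSubspace K (ξ k))ᗮ := by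
    rw [← Submodule.iInf_orthogonal, Submodule.mem_iInf]
    exact fun k => mem_orthogonal_cyclicSubspace_of_apply_eq_smul hK hv (hvξ k)
  rwa [hfull, Submodule.top_orthogonal_eq_bot, Submodule.mem_bot] at this

theorem linearIndependent_row_inner {ι κ : Type*} [Fintype ι] {φ : ι → H}
    (hφ : LinearIndependent ℝ φ) (ξ : κ → H)
    (h : ∀ v ∈ Submodule.span ℝ (Set.range φ), (∀ k, ⟪v, ξ k⟫ = 0) → v = 0) :
    LinearIndependent ℝ (Matrix.of fun j k => ⟪φ j, ξ k⟫).row := by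
  rw [Fintype.linearIndependent_iff]
  intro c hc
  refine Fintype.linearIndependent_iff.mp hφ c (h _ ?_ fun k => ?_)
  · exact Submodule.sum_mem _ fun j _ =>
      Submodule.smul_mem _ _ (Submodule.subset_span (Set.mem_range_self j))
  · simpa [sum_inner, real_inner_smul_left] using congrFun hc k

end

theorem stmt2_general {H : Type*} [NormedAddCommGroup H] [InnerProductSpace ℝ H] [CompleteSpace H]
    (K : H →L[ℝ] H) (hsa : IsSelfAdjoint K)
    (lam : ℝ)
    (Nlam : ℕ) (φ : Fin Nlam → H)
    (hφON : Orthonormal ℝ φ)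
    (hφspan : Submodule.span ℝ (Set.range φ) = Module.End.eigenspace (K : H →ₗ[ℝ] H) lam)
    (N : ℕ) (ξ : Fin N → H)
    (hfull : (⨆ k : Fin N, cyclicSubspace K (ξ k)) = ⊤) :
    (Matrix.of fun (j : Fin Nlam) (k : Fin N) => ⟪φ j, ξ k⟫).rank = Nlam := by
  have hrows := linearIndependent_row_inner hφON.linearIndependent ξ fun v hv hvξ => by
    rw [hφspan, Module.End.mem_eigenspace_iff] at hv
    exact eq_zero_of_apply_eq_smul_of_iSup_cyclicSubspace_eq_top hsa.isSymmetric hfull hv hvξ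
  rw [hrows.rank_matrix, Fintype.card_fin]

/-- `K` compact self-adjoint, `λ` an eigenvalue with eigenspace of finite
dimension `N_λ` and orthonormal basis `φ₁,…,φ_{N_λ}`, `ξ₁,…,ξ_N ∈ H`.
If `L_{ξ₁} + ⋯ + L_{ξ_N} = H`, then the matrix `(⟨φ_j, ξ_k⟩)` has rank `N_λ`. -/
theorem stmt2 {H : Type*} [NormedAddCommGroup H] [InnerProductSpace ℝ H] [CompleteSpace H]
    [TopologicalSpace.SeparableSpace H]
    (K : H →L[ℝ] H) (hcpt : IsCompactOperator K) (hsa : IsSelfAdjoint K)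
    (lam : ℝ) (hlam : Module.End.HasEigenvalue (K : H →ₗ[ℝ] H) lam)
    (Nlam : ℕ) (φ : Fin Nlam → H)
    (hφON : Orthonormal ℝ φ)
    (hφspan : Submodule.span ℝ (Set.range φ) = Module.End.eigenspace (K : H →ₗ[ℝ] H) lam)
    (N : ℕ) (ξ : Fin N → H)
    (hfull : (⨆ k : Fin N, cyclicSubspace K (ξ k)) = ⊤) :
    (Matrix.of fun (j : Fin Nlam) (k : Fin N) => ⟪φ j, ξ k⟫).rank = Nlam :=
  stmt2_general K hsa lam Nlam φ hφON hφspan N ξ hfull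
end

section
/- Let H be a separable Hilbert space and K a compact self-adjoint operator on H whose eigenvalues all have eigenspaces of dimension at most N < ∞. Enumerate the eigenvalues as λ₁, λ₂, … with multiplicities N_j ≤ N, and for each j choose orthonormal eigenfunctions φ_{j,1},…,φ_{j,N_j} spanning the eigenspace of λ_j, setting φ_{j,k} = 0 for N_j < k ≤ N. If for each k = 1,…,N one sets ξ_k = Σ_j c_{j,k} φ_{j,k} with all c_{j,k} ≠ 0 and the series converging in H, and the eigenvectors of K span a dense subspace of H, then L_{ξ₁} + ⋯ + L_{ξ_N} = H. -/
open scoped RealInnerProductSpace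

open Filter Topology Polynomial

section Moments

variable {ι : Type*} {b μ : ι → ℝ} {R : ℝ}

theorem summable_mul_of_abs_le {f : ι → ℝ} {C : ℝ} (hb : Summable fun i => |b i|)
    (hf : ∀ i, |f i| ≤ C) : Summable fun i => b i * f i :=
  Summable.of_norm_bounded (hb.mul_right C) fun i => by
    rw [Real.norm_eq_abs, abs_mul]
    exact mul_le_mul_of_nonneg_left (hf i) (abs_nonneg _)

theorem tsum_mul_eval_eq_zero (hb : Summable fun i => |b i|) (hμ : ∀ i, |μ i| ≤ R)
    (hmom : ∀ n : ℕ, ∑' i, b i * μ i ^ n = 0) (p : ℝ[X]) :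
    ∑' i, b i * p.eval (μ i) = 0 := by
  have hsummable : ∀ n, Summable fun i => p.coeff n * (b i * μ i ^ n) := fun n =>
    (summable_mul_of_abs_le hb fun i =>
      (abs_pow (μ i) n).trans_le (pow_le_pow_left₀ (abs_nonneg _) (hμ i) n)).mul_left _
  simp_rw [eval_eq_sum_range, Finset.mul_sum, mul_left_comm (b _)]
  rw [Summable.tsum_finsetSum fun n _ => hsummable n]
  exact Finset.sum_eq_zero fun n _ => by rw [tsum_mul_left, hmom n, mul_zero]

theorem summable_mul_comp (hb : Summable fun i => |b i|) (hμ : ∀ i, |μ i| ≤ R) {g : ℝ → ℝ}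
    (hg : Continuous g) : Summable fun i => b i * g (μ i) := by
  obtain ⟨C, hC⟩ := (isCompact_Icc (a := -R) (b := R)).exists_bound_of_continuousOn hg.continuousOn
  exact summable_mul_of_abs_le hb fun i => hC _ (abs_le.1 (hμ i))

theorem tsum_mul_comp_eq_zero (hb : Summable fun i => |b i|) (hμ : ∀ i, |μ i| ≤ R)
    (hmom : ∀ n : ℕ, ∑' i, b i * μ i ^ n = 0) {g : ℝ → ℝ} (hg : Continuous g) :
    ∑' i, b i * g (μ i) = 0 := by
  have hμIcc : ∀ i, μ i ∈ Set.Icc (-R) R := fun i => abs_le.1 (hμ i)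
  set B := ∑' i, |b i|
  have hB : 0 ≤ B := tsum_nonneg fun i => abs_nonneg _
  refine eq_of_forall_dist_le fun ε hε => ?_
  obtain ⟨p, hp⟩ := exists_polynomial_near_of_continuousOn (-R) R g hg.continuousOn
    (ε / (B + 1)) (by positivity)
  have hclose : ∀ i, ‖b i * g (μ i) - b i * p.eval (μ i)‖ ≤ ε / (B + 1) * |b i| := fun i => by
    rw [Real.norm_eq_abs, ← mul_sub, abs_mul, abs_sub_comm, mul_comm]
    exact mul_le_mul_of_nonneg_right (hp _ (hμIcc i)).le (abs_nonneg _)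
  calc dist (∑' i, b i * g (μ i)) 0
      = ‖∑' i, (b i * g (μ i) - b i * p.eval (μ i))‖ := by
        rw [(summable_mul_comp hb hμ hg).tsum_sub (summable_mul_comp hb hμ p.continuous),
          tsum_mul_eval_eq_zero hb hμ hmom, sub_zero, dist_zero_right]
    _ ≤ ε / (B + 1) * B := tsum_of_norm_bounded (hb.hasSum.mul_left _) hclose
    _ ≤ ε := by
        rw [div_mul_eq_mul_div, div_le_iff₀ (by positivity)]
        nlinarith

/-- Tent functions of shrinking width around `μ j` pick out the single coefficient `b j`, in the
limit, by dominated convergence. -/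
theorem eq_zero_of_tsum_mul_pow_eq_zero (hμinj : Function.Injective μ)
    (hb : Summable fun i => |b i|) (hμ : ∀ i, |μ i| ≤ R)
    (hmom : ∀ n : ℕ, ∑' i, b i * μ i ^ n = 0) : b = 0 := by
  classical
  funext j
  set tent : ℕ → ℝ → ℝ := fun m x => max 0 (1 - m * |x - μ j|)
  have htent_zero (m : ℕ) : ∑' i, b i * tent m (μ i) = 0 :=
    tsum_mul_comp_eq_zero hb hμ hmom (by fun_prop)
  have hlim (i : ι) : Tendsto (fun m => b i * tent m (μ i)) atTop
      (𝓝 (if i = j then b i else 0)) := by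
    split_ifs with hij
    · simp [tent, hij]
    · have hd : 0 < |μ i - μ j| := abs_pos.2 (sub_ne_zero.2 (hμinj.ne hij))
      obtain ⟨M, hM⟩ := exists_nat_ge (1 / |μ i - μ j|)
      refine tendsto_const_nhds.congr' (eventually_atTop.2 ⟨M, fun m hm => ?_⟩)
      have : 1 ≤ (m : ℝ) * |μ i - μ j| := by
        rw [div_le_iff₀ hd] at hM
        nlinarith [(Nat.cast_le (α := ℝ)).2 hm]
      simp only [tent, max_eq_left (sub_nonpos.2 this), mul_zero]
  have hbound : ∀ᶠ m in atTop, ∀ i, ‖b i * tent m (μ i)‖ ≤ |b i| :=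
    Eventually.of_forall fun m i => by
      rw [Real.norm_eq_abs, abs_mul, abs_of_nonneg (le_max_left 0 (1 - m * |μ i - μ j|))]
      refine mul_le_of_le_one_right (abs_nonneg _) (max_le zero_le_one ?_)
      nlinarith [abs_nonneg (μ i - μ j), (Nat.cast_nonneg m : (0 : ℝ) ≤ m)]
  have := tendsto_tsum_of_dominated_convergence hb hlim hbound
  simp only [htent_zero, tsum_ite_eq] at this
  exact tendsto_nhds_unique this tendsto_const_nhds

end Moments

namespace Submodule

variable {𝕜 E : Type*} [RCLike 𝕜] [NormedAddCommGroup E] [InnerProductSpace 𝕜 E]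

/-- The projection onto `Aᗮ` maps `A ⊔ B` into `B`, hence its closure into the closed `B`. -/
theorem isClosed_sup_of_le_orthogonal {A B : Submodule 𝕜 E} [A.HasOrthogonalProjection]
    (hB : IsClosed (B : Set E)) (hBA : B ≤ Aᗮ) : IsClosed ((A ⊔ B : Submodule 𝕜 E) : Set E) := by
  refine isClosed_of_closure_subset fun x hx => ?_
  have hmaps : Set.MapsTo Aᗮ.starProjection (A ⊔ B : Submodule 𝕜 E) B := by
    intro y hy
    obtain ⟨a, ha, b, hb, rfl⟩ := mem_sup.1 hy
    rw [SetLike.mem_coe, map_add, starProjection_orthogonal_apply_eq_zero ha,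
      starProjection_eq_self_iff.2 (hBA hb), zero_add]
    exact hb
  have hx' : Aᗮ.starProjection x ∈ B :=
    hB.closure_subset (hmaps.closure (ContinuousLinearMap.continuous _) hx)
  rw [SetLike.mem_coe, ← starProjection_add_starProjection_orthogonal (K := A) x]
  exact add_mem_sup (starProjection_apply_mem A x) hx'

theorem isClosed_iSup_of_pairwise_isOrtho [CompleteSpace E] {ι : Type*} [Finite ι]
    {L : ι → Submodule 𝕜 E} (hL : ∀ i, IsClosed (L i : Set E))
    (hortho : Pairwise fun i j => L i ⟂ L j) :
    IsClosed ((⨆ i, L i : Submodule 𝕜 E) : Set E) := by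
  classical
  cases nonempty_fintype ι
  suffices ∀ s : Finset ι, IsClosed ((⨆ i ∈ s, L i : Submodule 𝕜 E) : Set E) by
    simpa using this Finset.univ
  intro s
  induction s using Finset.induction with
  | empty => simp
  | insert a s ha ih =>
    have : CompleteSpace (L a) := (hL a).completeSpace_coe
    rw [Finset.iSup_insert]
    exact isClosed_sup_of_le_orthogonal ih
      (iSup₂_le fun i hi => (hortho fun h : i = a => ha (h ▸ hi)).le)

end Submodule

section CyclicSubspace

variable {H : Type*} [NormedAddCommGroup H] [InnerProductSpace ℝ H] {K : H →L[ℝ] H}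
  {ι : Type*} {e : ι → H} {lam c : ι → ℝ} {ξ : H}

theorem isClosed_cyclicSubspace (K : H →L[ℝ] H) (ξ : H) :
    IsClosed (cyclicSubspace K ξ : Set H) :=
  Submodule.isClosed_topologicalClosure _

theorem hasSum_pow_apply (heig : ∀ i, K (e i) = lam i • e i)
    (hξ : HasSum (fun i => c i • e i) ξ) (n : ℕ) :
    HasSum (fun i => (c i * lam i ^ n) • e i) ((K ^ n) ξ) := by
  have hpow (i : ι) : (K ^ n) (e i) = lam i ^ n • e i := by
    induction n with
    | zero => simp
    | succ n ih =>
      rw [pow_succ']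
      change K ((K ^ n) (e i)) = _
      rw [ih, map_smul, heig, smul_smul, ← pow_succ]
  simpa [hpow, smul_smul, mul_comm] using (K ^ n).hasSum hξ

theorem cyclicSubspace_le_of_hasSum {M : Submodule ℝ H} (hM : IsClosed (M : Set H))
    (he : ∀ i, e i ∈ M) (heig : ∀ i, K (e i) = lam i • e i)
    (hξ : HasSum (fun i => c i • e i) ξ) : cyclicSubspace K ξ ≤ M := by
  refine Submodule.topologicalClosure_minimal _ ?_ hM
  rw [Submodule.span_le]
  rintro _ ⟨n, rfl⟩
  change (K ^ n) ξ ∈ M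
  rw [← (hasSum_pow_apply heig hξ n).tsum_eq]
  exact tsum_mem hM fun i => M.smul_mem _ (he i)

theorem cyclicSubspace_isOrtho_of_hasSum {κ : Type*} {e' : κ → H} {lam' c' : κ → ℝ} {ξ' : H}
    (horth : ∀ i j, ⟪e i, e' j⟫ = 0)
    (heig : ∀ i, K (e i) = lam i • e i) (hξ : HasSum (fun i => c i • e i) ξ)
    (heig' : ∀ j, K (e' j) = lam' j • e' j) (hξ' : HasSum (fun j => c' j • e' j) ξ') :
    cyclicSubspace K ξ ⟂ cyclicSubspace K ξ' := by
  set S := Submodule.span ℝ (Set.range e)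
  have hle : cyclicSubspace K ξ ≤ S.topologicalClosure :=
    cyclicSubspace_le_of_hasSum S.isClosed_topologicalClosure
      (fun i => S.le_topologicalClosure (Submodule.subset_span ⟨i, rfl⟩)) heig hξ
  have hle' : cyclicSubspace K ξ' ≤ Sᗮ := by
    refine cyclicSubspace_le_of_hasSum (Submodule.isClosed_orthogonal S) (fun j => ?_) heig' hξ'
    refine ((Submodule.isOrtho_span (s := Set.range e) (t := Set.range e')).2 ?_).ge
      (Submodule.subset_span ⟨j, rfl⟩)
    rintro _ ⟨i, rfl⟩ _ ⟨j, rfl⟩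
    exact horth i j
  rw [← S.orthogonal_closure] at hle'
  exact (Submodule.isOrtho_iff_le.2 (hle'.trans (Submodule.orthogonal_le hle))).symm

theorem Orthonormal.inner_eq_of_hasSum (he : Orthonormal ℝ e) (hξ : HasSum (fun i => c i • e i) ξ)
    (i : ι) : ⟪e i, ξ⟫ = c i := by
  refine ((innerSL ℝ (e i)).hasSum hξ).unique ?_
  have := hasSum_single (f := fun j => innerSL ℝ (e i) (c j • e j)) i fun j hj => by
    simp [he.2 hj.symm]
  simpa [inner_smul_right, real_inner_self_eq_norm_sq, he.1 i] using this

theorem Orthonormal.summable_abs_mul_inner (he : Orthonormal ℝ e)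
    (hξ : HasSum (fun i => c i • e i) ξ) (v : H) : Summable fun i => |c i * ⟪e i, v⟫| := by
  have hc : Summable fun i => c i ^ 2 := by
    simpa [he.inner_eq_of_hasSum hξ, sq_abs] using he.inner_products_summable ξ
  have hv : Summable fun i => ⟪e i, v⟫ ^ 2 := by
    simpa [sq_abs] using he.inner_products_summable v
  refine Summable.of_nonneg_of_le (fun i => abs_nonneg _) (fun i => ?_) ((hc.add hv).div_const 2)
  rw [abs_mul, le_div_iff₀ two_pos, ← sq_abs (c i), ← sq_abs ⟪e i, v⟫]
  nlinarith [two_mul_le_add_sq |c i| |⟪e i, v⟫|]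

theorem Orthonormal.mem_cyclicSubspace_of_hasSum [CompleteSpace H] (he : Orthonormal ℝ e)
    (heig : ∀ i, K (e i) = lam i • e i) (hlam : Function.Injective lam) (hc : ∀ i, c i ≠ 0)
    (hξ : HasSum (fun i => c i • e i) ξ) (i : ι) : e i ∈ cyclicSubspace K ξ := by
  rw [cyclicSubspace, ← Submodule.orthogonal_orthogonal_eq_closure, Submodule.mem_orthogonal']
  intro v hv
  have hmom (n : ℕ) : ∑' j, c j * ⟪e j, v⟫ * lam j ^ n = 0 := by
    have hKn : ⟪v, (K ^ n) ξ⟫ = 0 :=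
      Submodule.inner_left_of_mem_orthogonal (Submodule.subset_span (Set.mem_range_self n)) hv
    rw [← hKn]
    refine Eq.trans ?_ ((innerSL ℝ v).hasSum (hasSum_pow_apply heig hξ n)).tsum_eq
    congr 1 with j
    rw [innerSL_apply_apply, inner_smul_right, real_inner_comm]
    ring
  have hR (j : ι) : |lam j| ≤ ‖K‖ := by
    simpa [heig, norm_smul, he.1 j] using K.le_opNorm (e j)
  have hb := eq_zero_of_tsum_mul_pow_eq_zero hlam (he.summable_abs_mul_inner hξ v) hR hmom
  exact (mul_eq_zero.1 (congrFun hb i)).resolve_left (hc i)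

theorem mem_cyclicSubspace_of_hasSum [CompleteSpace H] (hnorm : ∀ i, e i ≠ 0 → ‖e i‖ = 1)
    (horth : Pairwise fun i j => ⟪e i, e j⟫ = 0) (heig : ∀ i, K (e i) = lam i • e i)
    (hlam : Function.Injective lam) (hc : ∀ i, c i ≠ 0) (hξ : HasSum (fun i => c i • e i) ξ)
    (i : ι) : e i ∈ cyclicSubspace K ξ := by
  by_cases hi : e i = 0
  · rw [hi]
    exact zero_mem _
  set S := {j | e j ≠ 0}
  have he : Orthonormal ℝ fun j : S => e j :=
    ⟨fun j => hnorm j j.2, fun j j' h => horth (Subtype.val_injective.ne h)⟩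
  have hξS : HasSum (fun j : S => c j • e j) ξ := by
    refine (hasSum_subtype_iff_of_support_subset fun j hj => ?_).2 hξ
    rintro (h : e j = 0)
    simp [h] at hj
  exact he.mem_cyclicSubspace_of_hasSum (fun j => heig j) (hlam.comp Subtype.val_injective)
    (fun j => hc j) hξS ⟨i, hi⟩

end CyclicSubspace

theorem pairwise_inner_eq_zero_of_mem_eigenspace {H : Type*} [NormedAddCommGroup H]
    [InnerProductSpace ℝ H] [CompleteSpace H] {K : H →L[ℝ] H} (hsa : IsSelfAdjoint K)
    {ι κ : Type*} {lam : ι → ℝ} (hinj : Function.Injective lam) {φ : ι → κ → H}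
    (hφeig : ∀ i k, φ i k ∈ Module.End.eigenspace (K : H →ₗ[ℝ] H) (lam i))
    (hrow : ∀ i, Pairwise fun k l => ⟪φ i k, φ i l⟫ = 0) :
    Pairwise fun p q : ι × κ => ⟪φ p.1 p.2, φ q.1 q.2⟫ = 0 := by
  rintro ⟨i, k⟩ ⟨j, l⟩ hne
  by_cases hij : i = j
  · subst hij
    exact hrow i fun hkl => hne (Prod.ext rfl hkl)
  · exact (ContinuousLinearMap.isSelfAdjoint_iff_isSymmetric.1 hsa).orthogonalFamily_eigenspaces
      (hinj.ne hij) ⟨_, hφeig i k⟩ ⟨_, hφeig j l⟩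

theorem stmt3_general {H : Type*} [NormedAddCommGroup H] [InnerProductSpace ℝ H] [CompleteSpace H]
    (K : H →L[ℝ] H) (hsa : IsSelfAdjoint K)
    (N : ℕ)
    (lam : ℕ → ℝ) (hinj : Function.Injective lam)
    (Nj : ℕ → ℕ)
    (φ : ℕ → Fin N → H)
    (hφnorm : ∀ j, ∀ k : Fin N, (k : ℕ) < Nj j → ‖φ j k‖ = 1)
    (hφorth : ∀ j, ∀ k l : Fin N, (k : ℕ) < Nj j → (l : ℕ) < Nj j → k ≠ l →
      ⟪φ j k, φ j l⟫ = 0)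
    (hφzero : ∀ j, ∀ k : Fin N, Nj j ≤ (k : ℕ) → φ j k = 0)
    (hφspan : ∀ j, Submodule.span ℝ {x | ∃ k : Fin N, (k : ℕ) < Nj j ∧ x = φ j k} =
      Module.End.eigenspace (K : H →ₗ[ℝ] H) (lam j))
    (hdense : (⨆ j : ℕ,
      Module.End.eigenspace (K : H →ₗ[ℝ] H) (lam j)).topologicalClosure = ⊤)
    (c : ℕ → Fin N → ℝ) (hc : ∀ j k, c j k ≠ 0)
    (ξ : Fin N → H)
    (hξ : ∀ k : Fin N, HasSum (fun j : ℕ => c j k • φ j k) (ξ k)) :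
    (⨆ k : Fin N, cyclicSubspace K (ξ k)) = ⊤ := by
  have hφeig (j : ℕ) (k : Fin N) : φ j k ∈ Module.End.eigenspace (K : H →ₗ[ℝ] H) (lam j) := by
    rcases lt_or_ge (k : ℕ) (Nj j) with hk | hk
    · exact hφspan j ▸ Submodule.subset_span ⟨k, hk, rfl⟩
    · exact hφzero j k hk ▸ zero_mem _
  have hKφ (k : Fin N) (j : ℕ) : K (φ j k) = lam j • φ j k :=
    Module.End.mem_eigenspace_iff.1 (hφeig j k)
  have horth := pairwise_inner_eq_zero_of_mem_eigenspace hsa hinj hφeig fun j k l hkl => by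
    rcases lt_or_ge (k : ℕ) (Nj j) with hk | hk
    · rcases lt_or_ge (l : ℕ) (Nj j) with hl | hl
      · exact hφorth j k l hk hl hkl
      · simp [hφzero j l hl]
    · simp [hφzero j k hk]
  have hmem (k : Fin N) (j : ℕ) : φ j k ∈ cyclicSubspace K (ξ k) :=
    mem_cyclicSubspace_of_hasSum
      (fun i hi => hφnorm i k (not_le.1 fun hk => hi (hφzero i k hk)))
      (fun i i' h => @horth (i, k) (i', k) (by simp [h])) (hKφ k) hinj (fun i => hc i k) (hξ k) j
  have hclosed : IsClosed ((⨆ k, cyclicSubspace K (ξ k) : Submodule ℝ H) : Set H) :=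
    Submodule.isClosed_iSup_of_pairwise_isOrtho (fun k => isClosed_cyclicSubspace K (ξ k))
      fun k k' hk => cyclicSubspace_isOrtho_of_hasSum
        (fun j j' => @horth (j, k) (j', k') (by simp [hk])) (hKφ k) (hξ k) (hKφ k') (hξ k')
  have hle : (⨆ j, Module.End.eigenspace (K : H →ₗ[ℝ] H) (lam j)) ≤
      ⨆ k, cyclicSubspace K (ξ k) := iSup_le fun j => by
    rw [← hφspan j, Submodule.span_le]
    rintro _ ⟨k, -, rfl⟩
    exact Submodule.mem_iSup_of_mem k (hmem k j)
  rw [eq_top_iff, ← hdense]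
  exact Submodule.topologicalClosure_minimal _ hle hclosed

/-- `K` compact self-adjoint with all eigenvalue multiplicities `≤ N`,
eigenvalues enumerated as `λ₁, λ₂, …` (distinct), each eigenspace of dimension `N_j ≤ N`
spanned by orthonormal eigenfunctions `φ_{j,1},…,φ_{j,N_j}` with `φ_{j,k} = 0` for
`N_j < k ≤ N`.  If `ξ_k = Σ_j c_{j,k} φ_{j,k}` with all `c_{j,k} ≠ 0` (series converging
in `H`), and the eigenvectors of `K` span a dense subspace, then
`L_{ξ₁} + ⋯ + L_{ξ_N} = H`. -/
theorem stmt3 {H : Type*} [NormedAddCommGroup H] [InnerProductSpace ℝ H] [CompleteSpace H]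
    [TopologicalSpace.SeparableSpace H]
    (K : H →L[ℝ] H) (hcpt : IsCompactOperator K) (hsa : IsSelfAdjoint K)
    (N : ℕ)
    (lam : ℕ → ℝ) (hinj : Function.Injective lam)
    (hev : ∀ j, Module.End.HasEigenvalue (K : H →ₗ[ℝ] H) (lam j))
    (hall : ∀ μ : ℝ, Module.End.HasEigenvalue (K : H →ₗ[ℝ] H) μ → ∃ j, lam j = μ)
    (Nj : ℕ → ℕ) (hNjN : ∀ j, Nj j ≤ N)
    (hmult : ∀ j, Module.finrank ℝ (Module.End.eigenspace (K : H →ₗ[ℝ] H) (lam j)) = Nj j)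
    (φ : ℕ → Fin N → H)
    (hφnorm : ∀ j, ∀ k : Fin N, (k : ℕ) < Nj j → ‖φ j k‖ = 1)
    (hφorth : ∀ j, ∀ k l : Fin N, (k : ℕ) < Nj j → (l : ℕ) < Nj j → k ≠ l →
      ⟪φ j k, φ j l⟫ = 0)
    (hφzero : ∀ j, ∀ k : Fin N, Nj j ≤ (k : ℕ) → φ j k = 0)
    (hφspan : ∀ j, Submodule.span ℝ {x | ∃ k : Fin N, (k : ℕ) < Nj j ∧ x = φ j k} =
      Module.End.eigenspace (K : H →ₗ[ℝ] H) (lam j))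
    (hdense : (⨆ j : ℕ,
      Module.End.eigenspace (K : H →ₗ[ℝ] H) (lam j)).topologicalClosure = ⊤)
    (c : ℕ → Fin N → ℝ) (hc : ∀ j k, c j k ≠ 0)
    (ξ : Fin N → H)
    (hξ : ∀ k : Fin N, HasSum (fun j : ℕ => c j k • φ j k) (ξ k)) :
    (⨆ k : Fin N, cyclicSubspace K (ξ k)) = ⊤ :=
  stmt3_general K hsa N lam hinj Nj φ hφnorm hφorth hφzero hφspan hdense c hc ξ hξ
end
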